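/- arXiv:1908.09164 — 2 statements merged into one kernel-verified Lean document; each statement's English description precedes it below -/
import Mathlib

section
/- The following hold for the subalgebra S: (i) Q_m(S) ⊆ S for every m ∈ ℕ; (ii) for every m ≥ 1, every x ∈ S with Q_m(x) = 0 equals Q_m(y) for some y ∈ S; (iii) 1 ∉ Q_0(S), and every x ∈ S with Q_0(x) = 0 may be written x = Q_0(y) + c·1 with y ∈ S and c ∈ F₂. In other words, the Margolis homology of S is F₂ (spanned by 1) for m = 0 and vanishes for all m ≥ 1. (Corollary 2.16 of the paper: H(HZ; Q_0) ≅ F₂ and H(HZ; Q_m) ≅ 0 for m > 0.) -/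
/-!
Let `F₂ := ZMod 2` and `A := MvPolynomial {i : ℕ // 1 ≤ i} F₂`, modeling the mod 2 dual
Steenrod algebra, with Milnor primitives `Q m` as below.  Let `S ⊆ A` be the `F₂`-subalgebra
generated by `ξ₁²` together with `ξ_k` for all `k ≥ 2`, modeling `H_*(HZ; F₂)`.

STATEMENT (Corollary 2.16): (i) `Q_m (S) ⊆ S` for every `m`; (ii) for every `m ≥ 1`, every
`x ∈ S` with `Q_m x = 0` equals `Q_m y` for some `y ∈ S`; (iii) `1 ∉ Q_0 (S)`, and every
`x ∈ S` with `Q_0 x = 0` can be written `x = Q_0 y + c • 1` with `y ∈ S`, `c ∈ F₂`.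
-/

open MvPolynomial

abbrev F₂ : Type := ZMod 2

/-- The mod 2 dual Steenrod algebra, modeled as a polynomial algebra on `ξ_i`, `i ≥ 1`. -/
abbrev A : Type := MvPolynomial {i : ℕ // 1 ≤ i} F₂

/-- The generators `ξ_k`, with the convention `ξ_0 = 1`. -/
noncomputable def ξ (k : ℕ) : A :=
  if h : 1 ≤ k then X (⟨k, h⟩ : {i : ℕ // 1 ≤ i}) else 1

/-- The Milnor primitive `Q_m`, as the unique `F₂`-derivation of `A` with
`Q_m (ξ_k) = ξ_{k-m-1} ^ (2 ^ (m+1))` for `k ≥ m + 1` and `Q_m (ξ_k) = 0` for `1 ≤ k ≤ m`. -/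
noncomputable def Q (m : ℕ) : Derivation F₂ A A :=
  MvPolynomial.mkDerivation F₂ fun i : {i : ℕ // 1 ≤ i} =>
    if m + 1 ≤ i.1 then ξ (i.1 - (m + 1)) ^ 2 ^ (m + 1) else 0

/-- The subalgebra `S = F₂[ξ₁², ξ₂, ξ₃, …] ⊆ A`, modeling `H_*(HZ; F₂)`. -/
noncomputable def S : Subalgebra F₂ A :=
  Algebra.adjoin F₂ ({ξ 1 ^ 2} ∪ {y : A | ∃ k : ℕ, 2 ≤ k ∧ y = ξ k})


-- ### Auxiliary development
set_option linter.unreachableTactic false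
set_option linter.unusedTactic false


abbrev I : Type := {i : ℕ // 1 ≤ i}

lemma Q_X (m : ℕ) (i : I) :
    Q m (X i) = if m + 1 ≤ i.1 then ξ (i.1 - (m + 1)) ^ 2 ^ (m + 1) else 0 := by
  simp [Q]

lemma xi_mem_S {k : ℕ} (hk : 2 ≤ k) : ξ k ∈ S :=
  Algebra.subset_adjoin (Or.inr ⟨k, hk, rfl⟩)

lemma xi1_sq_mem_S : ξ 1 ^ 2 ∈ S := Algebra.subset_adjoin (Or.inl rfl)

lemma charA : (2 : A) = 0 := by
  have := CharP.cast_eq_zero A 2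
  simpa using this

lemma Q_xi1_sq (m : ℕ) : Q m (ξ 1 ^ 2) = 0 := by
  rw [pow_two, Derivation.leibniz, smul_eq_mul]
  rw [← two_mul, charA, zero_mul]

lemma Q_pow_mem (m : ℕ) {k : ℕ} (hk : 2 ≤ k) : Q m (ξ k) ∈ S := by
  rw [show ξ k = X (⟨k, by omega⟩ : I) from by rw [ξ, dif_pos]]
  rw [Q_X]
  split
  · set j := k - (m+1) with hj
    rcases Nat.lt_or_ge j 2 with hj2 | hj2
    · interval_cases j
      · simp only [ξ, dif_neg (by omega : ¬ 1 ≤ 0), one_pow]; exact one_mem S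
      · rw [show 2^(m+1) = 2 * 2^m from by rw [pow_succ]; ring, pow_mul]
        exact pow_mem xi1_sq_mem_S _
    · exact pow_mem (xi_mem_S hj2) _
  · exact zero_mem S

theorem part1 : ∀ m : ℕ, ∀ x ∈ S, Q m x ∈ S := by
  intro m x hx
  induction hx using Algebra.adjoin_induction with
  | mem g hg =>
    rcases hg with h1 | ⟨k, hk, rfl⟩
    · rw [Set.mem_singleton_iff.mp h1, Q_xi1_sq]; exact zero_mem S
    · exact Q_pow_mem m hk
  | algebraMap r => rw [Derivation.map_algebraMap]; exact zero_mem S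
  | add x y hx hy ihx ihy => rw [map_add]; exact add_mem ihx ihy
  | mul x y hx hy ihx ihy =>
    rw [Derivation.leibniz, smul_eq_mul]
    exact add_mem (mul_mem hx ihy) (mul_mem hy ihx)

theorem part2 : ∀ m : ℕ, 1 ≤ m → ∀ x ∈ S, Q m x = 0 → ∃ y ∈ S, x = Q m y := by
  intro m hm x hx hqx
  refine ⟨ξ (m+1) * x, mul_mem (xi_mem_S (by omega)) hx, ?_⟩
  rw [Derivation.leibniz, smul_eq_mul, hqx, mul_zero]
  have : Q m (ξ (m+1)) = 1 := by
    rw [show ξ (m+1) = X (⟨m+1, by omega⟩ : I) from by rw [ξ, dif_pos]]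
    rw [Q_X, if_pos (le_refl _)]
    simp [ξ]
  rw [this, smul_eq_mul, mul_one, zero_add]

-- ### constant coefficient of Q 0 on S
lemma Q0_X' (i : I) : Q 0 (X i) = ξ (i.1 - 1) ^ 2 := by
  rw [Q_X, if_pos (by omega : 0 + 1 ≤ i.1)]
  norm_num

lemma cc_Q0 (x : A) (hx : x ∈ S) : constantCoeff (Q 0 x) = 0 := by
  induction hx using Algebra.adjoin_induction with
  | mem g hg =>
    rcases hg with h1 | ⟨k, hk, rfl⟩
    · rw [Set.mem_singleton_iff.mp h1, Q_xi1_sq, map_zero]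
    · rw [show ξ k = X (⟨k, by omega⟩ : I) from by rw [ξ, dif_pos], Q0_X']
      rw [show ξ (k - 1) = X (⟨k-1, by omega⟩ : I) from by rw [ξ, dif_pos (by omega)]]
      simp
  | algebraMap r => rw [Derivation.map_algebraMap, map_zero]
  | add x y hx hy ihx ihy => rw [map_add, map_add, ihx, ihy, add_zero]
  | mul x y hx hy ihx ihy =>
    rw [Derivation.leibniz, smul_eq_mul, smul_eq_mul, map_add, map_mul, map_mul, ihx, ihy]
    ring

theorem part3a : ¬ ∃ y ∈ S, Q 0 y = 1 := by
  rintro ⟨y, hy, hQ⟩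
  have := cc_Q0 y hy
  rw [hQ, map_one] at this
  exact one_ne_zero this

-- ### exponent bookkeeping
def E (e : I →₀ ℕ) (k : ℕ) : ℕ := if h : 1 ≤ k then e ⟨k, h⟩ else 0

lemma E_eq (e : I →₀ ℕ) (k : ℕ) (h : 1 ≤ k) : E e k = e ⟨k, h⟩ := dif_pos h

lemma E_apply (e : I →₀ ℕ) (i : I) : e i = E e i.1 := by
  rw [E_eq e i.1 i.2]

def P (e : I →₀ ℕ) (k : ℕ) : Prop := 2 ≤ k ∧ (2 ≤ E e (k-1) ∨ Odd (E e k))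

noncomputable def mv (e : I →₀ ℕ) : A := monomial e 1

noncomputable def mvup (e : I →₀ ℕ) (i : I) : I →₀ ℕ :=
  if h : 2 ≤ i.1 then e - Finsupp.single i 1 + Finsupp.single ⟨i.1 - 1, by omega⟩ 2
  else e - Finsupp.single i 1

noncomputable def mvdn (e : I →₀ ℕ) (k : ℕ) : I →₀ ℕ :=
  if h : 2 ≤ k then e - Finsupp.single (⟨k - 1, by omega⟩ : I) 2 + Finsupp.single (⟨k, by omega⟩ : I) 1
  else e

open Classical in
noncomputable def Hm (e : I →₀ ℕ) : A :=
  if h : ∃ k, P e k then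
    (if Odd (E e (Nat.find h)) then 0 else mv (mvdn e (Nat.find h)))
  else 0

noncomputable def Hf (x : A) : A := ∑ e ∈ x.support, coeff e x • Hm e

-- value lemmas
lemma mvup_apply (e : I →₀ ℕ) (i : I) (h2 : 2 ≤ i.1) (j : I) :
    mvup e i j = e j - (if j = i then 1 else 0) + (if j.1 = i.1 - 1 then 2 else 0) := by
  rw [mvup, dif_pos h2]
  rw [Finsupp.add_apply, Finsupp.tsub_apply, Finsupp.single_apply, Finsupp.single_apply]
  congr 2
  · simp [eq_comm]
  · simp only [Subtype.ext_iff, eq_comm]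

lemma mvdn_apply (e : I →₀ ℕ) (k : ℕ) (h2 : 2 ≤ k) (j : I) :
    mvdn e k j = e j - (if j.1 = k - 1 then 2 else 0) + (if j.1 = k then 1 else 0) := by
  rw [mvdn, dif_pos h2]
  rw [Finsupp.add_apply, Finsupp.tsub_apply, Finsupp.single_apply, Finsupp.single_apply]
  congr 2
  · simp only [Subtype.ext_iff, eq_comm]
  · simp only [Subtype.ext_iff, eq_comm]

lemma E_zero_of_lt (e : I →₀ ℕ) {k : ℕ} (h : k < 1) : E e k = 0 := by
  rw [E, dif_neg (by omega)]

lemma E_mvup (e : I →₀ ℕ) (i : I) (h2 : 2 ≤ i.1) (k : ℕ) (hk : 1 ≤ k) :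
    E (mvup e i) k = E e k - (if k = i.1 then 1 else 0) + (if k = i.1 - 1 then 2 else 0) := by
  rw [E_eq _ _ hk, mvup_apply e i h2, ← E_eq e k hk]
  congr 2
  simp [Subtype.ext_iff]

lemma E_mvdn (e : I →₀ ℕ) (K : ℕ) (h2 : 2 ≤ K) (k : ℕ) (hk : 1 ≤ k) :
    E (mvdn e K) k = E e k - (if k = K - 1 then 2 else 0) + (if k = K then 1 else 0) := by
  rw [E_eq _ _ hk, mvdn_apply e K h2, ← E_eq e k hk]

lemma Hm_eq (e : I →₀ ℕ) (K : ℕ) (h2 : 2 ≤ K)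
    (hz : ∀ j ≤ K - 2, E e j = 0) (hev : ∀ j ≤ K - 1, Even (E e j))
    (ht : 2 ≤ E e (K - 1) ∨ Odd (E e K)) :
    Hm e = if Odd (E e K) then 0 else mv (mvdn e K) := by
  classical
  have hex : ∃ k, P e k := ⟨K, h2, ht⟩
  rw [Hm, dif_pos hex]
  have hfind : Nat.find hex = K := by
    rw [Nat.find_eq_iff]
    refine ⟨⟨h2, ht⟩, fun j hj => ?_⟩
    rintro ⟨hj2, hcase⟩
    rcases hcase with hc | hc
    · rw [hz (j-1) (by omega)] at hc; omega
    · have := hev j (by omega)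
      rw [Nat.even_iff] at this
      rw [Nat.odd_iff] at hc
      omega
  rw [hfind]

lemma exists_P (e : I →₀ ℕ) (he : Even (E e 1)) (hne : e ≠ 0) : ∃ k, P e k := by
  obtain ⟨i, hi⟩ : ∃ i, e i ≠ 0 := by
    by_contra h
    push_neg at h
    exact hne (Finsupp.ext h)
  rcases Nat.lt_or_ge i.1 2 with h1 | h2
  · have hi1 : i.1 = 1 := by omega
    have : E e 1 = e i := by rw [E_eq e 1 (by omega)]; congr 1; exact Subtype.ext hi1.symm
    refine ⟨2, by omega, Or.inl ?_⟩
    rw [show (2:ℕ) - 1 = 1 from rfl, this]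
    rcases he with ⟨t, ht⟩
    omega
  · rcases Nat.even_or_odd (e i) with hpar | hpar
    · refine ⟨i.1 + 1, by omega, Or.inl ?_⟩
      rw [show i.1 + 1 - 1 = i.1 from rfl, E_eq e i.1 (by omega)]
      have : (⟨i.1, by omega⟩ : I) = i := Subtype.ext rfl
      rw [this]
      rcases hpar with ⟨t, ht⟩
      omega
    · exact ⟨i.1, h2, Or.inr (by rwa [E_eq e i.1 (by omega), show (⟨i.1, _⟩ : I) = i from Subtype.ext rfl])⟩

lemma natCast_F2_even {n : ℕ} (h : Even n) : (n : F₂) = 0 := by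
  rcases h with ⟨t, ht⟩
  subst ht
  push_cast
  rw [← two_mul, show ((2:F₂)) = 0 from by decide, zero_mul]

lemma natCast_F2_odd {n : ℕ} (h : Odd n) : (n : F₂) = 1 := by
  rcases h with ⟨t, ht⟩
  subst ht
  push_cast
  rw [show ((2:F₂)) = 0 from by decide, zero_mul, zero_add]

lemma Q0_mv (e : I →₀ ℕ) (he : Even (E e 1)) :
    Q 0 (mv e) = ∑ i ∈ e.support.filter (fun i => Odd (e i)), mv (mvup e i) := by
  classical
  rw [mv, Q, mkDerivation_monomial, one_smul, Finsupp.sum]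
  rw [← Finset.sum_filter_add_sum_filter_not e.support (fun i => Odd (e i))]
  have h2 : ∑ i ∈ e.support.filter (fun i => ¬ Odd (e i)),
      monomial (e - Finsupp.single i 1) ((e i : ℕ) : F₂) •
        (if 0 + 1 ≤ i.1 then ξ (i.1 - (0 + 1)) ^ 2 ^ (0 + 1) else 0) = 0 := by
    apply Finset.sum_eq_zero
    intro i hi
    rw [Finset.mem_filter] at hi
    rw [natCast_F2_even (Nat.not_odd_iff_even.mp hi.2), monomial_zero, zero_smul]
  rw [h2, add_zero]
  apply Finset.sum_congr rfl
  intro i hi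
  rw [Finset.mem_filter] at hi
  have hi2 : 2 ≤ i.1 := by
    rcases Nat.lt_or_ge i.1 2 with h1 | h1
    · exfalso
      have hi1 : i = ⟨1, by omega⟩ := Subtype.ext (by have := i.2; simp only []; omega)
      rw [hi1] at hi
      rw [← E_eq e 1 (by omega)] at hi
      rw [Nat.even_iff] at he
      rcases hi.2 with ⟨t, ht⟩
      omega
    · exact h1
  rw [if_pos (show 0 + 1 ≤ i.1 by omega), natCast_F2_odd hi.2]
  have hxi : ξ (i.1 - (0 + 1)) = X (⟨i.1 - 1, by omega⟩ : I) := by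
    rw [ξ, dif_pos (by omega : 1 ≤ i.1 - (0+1))]
  rw [hxi, show (2:ℕ)^(0+1) = 2 from rfl, X_pow_eq_monomial, smul_eq_mul, monomial_mul, one_mul,
    mv, mvup, dif_pos hi2]

lemma I1 (e : I →₀ ℕ) (K : ℕ) (h2 : 2 ≤ K) (h1 : 1 ≤ E e K) :
    mvdn (mvup e ⟨K, by omega⟩) K = e := by
  ext j
  rw [mvdn_apply _ _ h2, mvup_apply _ _ (by simpa using h2)]
  simp only [E_apply e j, Subtype.ext_iff]
  split_ifs <;> simp_all <;> omega

lemma I2 (e : I →₀ ℕ) (K : ℕ) (h2 : 2 ≤ K) (h1 : 2 ≤ E e (K - 1)) :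
    mvup (mvdn e K) ⟨K, by omega⟩ = e := by
  ext j
  have p1 : j.1 = K - 1 → 2 ≤ e j := fun h => by rw [E_apply e j, h]; exact h1
  rw [mvup_apply _ _ (by simpa using h2), mvdn_apply _ _ h2]
  simp only [Subtype.ext_iff]
  split_ifs <;> (try have q1 := p1 ‹_›) <;> omega

lemma I3 (e : I →₀ ℕ) (K : ℕ) (i : I) (h2 : 2 ≤ K) (hiK : K < i.1)
    (h1 : 2 ≤ E e (K - 1)) (hei : 1 ≤ E e i.1) :
    mvdn (mvup e i) K = mvup (mvdn e K) i := by
  have hi2 : 2 ≤ i.1 := by omega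
  ext j
  have p1 : j.1 = K - 1 → 2 ≤ e j := fun h => by rw [E_apply e j, h]; exact h1
  have p2 : j.1 = i.1 → 1 ≤ e j := fun h => by rw [E_apply e j, h]; exact hei
  rw [mvdn_apply _ _ h2, mvup_apply _ _ hi2, mvup_apply _ _ hi2, mvdn_apply _ _ h2]
  simp only [Subtype.ext_iff]
  split_ifs <;> (try have q1 := p1 ‹_›) <;> (try have q2 := p2 ‹_›) <;> omega

lemma Hf_zero : Hf 0 = 0 := by simp [Hf]

lemma Hf_add (x y : A) : Hf (x + y) = Hf x + Hf y := by
  classical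
  rw [Hf, Hf, Hf]
  rw [Finset.sum_subset (MvPolynomial.support_add (p := x) (q := y))
    (fun e _ he => by rw [notMem_support_iff.mp he, zero_smul])]
  rw [Finset.sum_subset (Finset.subset_union_left (s₁ := x.support) (s₂ := y.support))
    (fun e _ he => by rw [notMem_support_iff.mp he, zero_smul])]
  rw [Finset.sum_subset (Finset.subset_union_right (s₁ := x.support) (s₂ := y.support))
    (fun e _ he => by rw [notMem_support_iff.mp he, zero_smul])]
  rw [← Finset.sum_add_distrib]
  apply Finset.sum_congr rfl
  intro e _
  rw [coeff_add, add_smul]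

lemma Hf_mv (e : I →₀ ℕ) : Hf (mv e) = Hm e := by
  classical
  rw [Hf, mv, support_monomial, if_neg (one_ne_zero)]
  rw [Finset.sum_singleton, coeff_monomial, if_pos rfl, one_smul]

lemma Hf_sum {α : Type} (s : Finset α) (g : α → A) : Hf (∑ a ∈ s, g a) = ∑ a ∈ s, Hf (g a) := by
  classical
  induction s using Finset.induction with
  | empty => simp [Hf_zero]
  | insert a s hns hins => rw [Finset.sum_insert hns, Finset.sum_insert hns, Hf_add, hins]

lemma F2_cases (c : F₂) : c = 0 ∨ c = 1 := by revert c; decide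

lemma Hf_smul (c : F₂) (x : A) : Hf (c • x) = c • Hf x := by
  rcases F2_cases c with rfl | rfl
  · simp [Hf_zero]
  · simp

lemma X_pow_mem_S (i : I) (n : ℕ) (h : i.1 = 1 → Even n) : X i ^ n ∈ S := by
  rcases Nat.lt_or_ge i.1 2 with h1 | h1
  · have hi1 : i = ⟨1, by omega⟩ := Subtype.ext (by have := i.2; simp only []; omega)
    obtain ⟨t, ht⟩ := h (by rw [hi1])
    rw [hi1, show n = 2 * t from by omega, pow_mul]
    apply pow_mem
    have : (X (⟨1, by omega⟩ : I) : A) = ξ 1 := by rw [ξ, dif_pos]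
    rw [this]
    exact xi1_sq_mem_S
  · apply pow_mem
    have : (X i : A) = ξ i.1 := by rw [ξ, dif_pos (by omega : 1 ≤ i.1)]
    rw [this]
    exact xi_mem_S h1

lemma mem_S_of_even (e : I →₀ ℕ) (he : Even (E e 1)) : mv e ∈ S := by
  rw [mv, monomial_eq, C_1, one_mul, Finsupp.prod]
  apply prod_mem
  intro i _
  apply X_pow_mem_S
  intro hi1
  have : e i = E e 1 := by rw [E_apply e i, hi1]
  rw [this]
  exact he

lemma support_even {x : A} (hx : x ∈ S) : ∀ e ∈ x.support, Even (E e 1) := by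
  classical
  induction hx using Algebra.adjoin_induction with
  | mem g hg =>
    rcases hg with h1 | ⟨k, hk, rfl⟩
    · rw [Set.mem_singleton_iff.mp h1]
      intro e he
      rw [show (ξ 1 ^ 2 : A) = monomial (Finsupp.single (⟨1, le_refl 1⟩ : I) 2) 1 from by
        rw [ξ, dif_pos (le_refl 1)]; exact X_pow_eq_monomial] at he
      rw [support_monomial, if_neg one_ne_zero, Finset.mem_singleton] at he
      subst he
      rw [E_eq _ 1 (le_refl 1), Finsupp.single_apply, if_pos rfl]
      exact ⟨1, rfl⟩
    · intro e he
      rw [show (ξ k : A) = X (⟨k, by omega⟩ : I) from by rw [ξ, dif_pos]] at he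
      rw [support_X, Finset.mem_singleton] at he
      subst he
      rw [E_eq _ 1 (le_refl 1), Finsupp.single_apply,
        if_neg (by simp only [Subtype.ext_iff]; omega)]
      exact ⟨0, rfl⟩
  | algebraMap r =>
    intro e he
    have hC : (algebraMap F₂ A r) = monomial 0 r := rfl
    rw [hC, support_monomial] at he
    split at he
    · exact absurd he (Finset.notMem_empty e)
    · rw [Finset.mem_singleton] at he
      subst he
      rw [E_eq _ 1 (le_refl 1)]
      exact ⟨0, rfl⟩
  | add x y hx hy ihx ihy =>
    intro e he
    rcases Finset.mem_union.mp (MvPolynomial.support_add he) with h | h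
    exacts [ihx e h, ihy e h]
  | mul x y hx hy ihx ihy =>
    intro e he
    have := MvPolynomial.support_mul x y he
    rw [Finset.mem_add] at this
    obtain ⟨a, ha, b, hb, rfl⟩ := this
    rw [E_eq _ 1 (le_refl 1), Finsupp.add_apply]
    have h1 := ihx a ha
    have h2 := ihy b hb
    rw [E_eq _ 1 (le_refl 1)] at h1
    rw [E_eq _ 1 (le_refl 1)] at h2
    exact h1.add h2

lemma Hm_mem (e : I →₀ ℕ) (he : Even (E e 1)) : Hm e ∈ S := by
  classical
  rw [Hm]
  split
  · rename_i h
    split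
    · exact zero_mem S
    · rename_i hodd
      have hP := Nat.find_spec h
      obtain ⟨h2, hcase⟩ := hP
      have h2e : 2 ≤ E e (Nat.find h - 1) := by
        rcases hcase with hc | hc
        · exact hc
        · exact absurd hc hodd
      apply mem_S_of_even
      rw [E_mvdn e _ h2 1 le_rfl, if_neg (show ¬ (1 = Nat.find h) by omega), add_zero]
      by_cases h1 : 1 = Nat.find h - 1
      · rw [if_pos h1]
        rw [← h1] at h2e
        rw [Nat.even_iff] at he ⊢
        omega
      · rw [if_neg h1]
        simpa using he
  · exact zero_mem S

lemma Hf_mem {x : A} (hx : x ∈ S) : Hf x ∈ S := by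
  apply Subalgebra.sum_mem
  intro e he
  exact Subalgebra.smul_mem S (Hm_mem e (support_even hx e he)) _

lemma mem_filt (g : I →₀ ℕ) (i : I) :
    i ∈ g.support.filter (fun i => Odd (g i)) ↔ Odd (g i) := by
  rw [Finset.mem_filter, Finsupp.mem_support_iff]
  constructor
  · exact fun h => h.2
  · intro h
    refine ⟨?_, h⟩
    rw [Nat.odd_iff] at h
    omega

-- structure facts for the least triggered index
lemma hev_of_min (e : I →₀ ℕ) (K : ℕ) (he : Even (E e 1)) (h2 : 2 ≤ K)
    (hmin : ∀ j < K, ¬ P e j) : ∀ j ≤ K - 1, Even (E e j) := by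
  intro j hj
  rcases Nat.lt_or_ge j 1 with h | h
  · rw [E_zero_of_lt e h]; exact Even.zero
  · rcases Nat.lt_or_ge j 2 with h' | h'
    · rw [show j = 1 from by omega]; exact he
    · have hnp := hmin j (by omega)
      rw [P] at hnp
      push_neg at hnp
      have := hnp h'
      rw [Nat.even_iff]
      rw [Nat.odd_iff] at this
      omega

lemma hz_of_min (e : I →₀ ℕ) (K : ℕ) (he : Even (E e 1)) (h2 : 2 ≤ K)
    (hmin : ∀ j < K, ¬ P e j) : ∀ j ≤ K - 2, E e j = 0 := by
  intro j hj
  rcases Nat.lt_or_ge j 1 with h | h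
  · exact E_zero_of_lt e h
  · have hnp := hmin (j+1) (by omega)
    rw [P] at hnp
    push_neg at hnp
    have h1 := (hnp (by omega)).1
    rw [show j + 1 - 1 = j from rfl] at h1
    have h2' := hev_of_min e K he h2 hmin j (by omega)
    rw [Nat.even_iff] at h2'
    omega

-- every odd-exponent index is ≥ K
lemma odd_ge_K (e : I →₀ ℕ) (K : ℕ) (h2 : 2 ≤ K)
    (hz : ∀ j ≤ K - 2, E e j = 0) (hev : ∀ j ≤ K - 1, Even (E e j))
    (i : I) (hi : Odd (e i)) : K ≤ i.1 := by
  by_contra hlt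
  push_neg at hlt
  rw [E_apply e i] at hi
  rcases Nat.lt_or_ge i.1 (K - 1) with h | h
  · rw [hz i.1 (by omega)] at hi
    have := Nat.odd_iff.mp hi
    omega
  · have := hev i.1 (by omega)
    rw [Nat.even_iff] at this
    rw [Nat.odd_iff] at hi
    omega

lemma Imk (k : ℕ) (h : 1 ≤ k) : ((⟨k, h⟩ : I)).1 = k := rfl

lemma Hm_mvup_eq_K (e : I →₀ ℕ) (K : ℕ) (h2 : 2 ≤ K)
    (hz : ∀ j ≤ K - 2, E e j = 0) (hev : ∀ j ≤ K - 1, Even (E e j))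
    (hodd : Odd (E e K)) :
    Hm (mvup e ⟨K, by omega⟩) = mv e := by
  have hE : ∀ j, 1 ≤ j → E (mvup e ⟨K, by omega⟩) j
      = E e j - (if j = K then 1 else 0) + (if j = K - 1 then 2 else 0) := by
    intro j hj
    rw [E_mvup e _ (by rw [Imk]; exact h2) j hj, Imk]
  have hoddK : 1 ≤ E e K := by rw [Nat.odd_iff] at hodd; omega
  rw [Hm_eq _ K h2 ?hz ?hev ?ht]
  case hz =>
    intro j hj
    rcases Nat.lt_or_ge j 1 with h | h
    · exact E_zero_of_lt _ h
    · rw [hE j h, if_neg (by omega), if_neg (by omega), hz j hj]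
  case hev =>
    intro j hj
    rcases Nat.lt_or_ge j 1 with h | h
    · rw [E_zero_of_lt _ h]; exact Even.zero
    · rw [hE j h, if_neg (by omega)]
      by_cases hK1 : j = K - 1
      · rw [if_pos hK1, hK1]
        have := hev (K-1) le_rfl
        rw [Nat.even_iff] at this ⊢
        omega
      · rw [if_neg hK1, Nat.sub_zero, add_zero]
        exact hev j hj
  case ht =>
    left
    rw [hE (K-1) (by omega), if_neg (by omega), if_pos rfl]
    omega
  rw [if_neg ?_, I1 e K h2 hoddK]
  rw [hE K (by omega), if_pos rfl, if_neg (by omega), add_zero]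
  rw [Nat.odd_iff] at hodd ⊢
  omega

lemma Hm_mvup_gt_oddK (e : I →₀ ℕ) (K : ℕ) (i : I) (h2 : 2 ≤ K) (hiK : K < i.1)
    (hz : ∀ j ≤ K - 2, E e j = 0) (hev : ∀ j ≤ K - 1, Even (E e j))
    (hodd : Odd (E e K)) :
    Hm (mvup e i) = 0 := by
  have hi2 : 2 ≤ i.1 := by omega
  have hE : ∀ j, 1 ≤ j → E (mvup e i) j
      = E e j - (if j = i.1 then 1 else 0) + (if j = i.1 - 1 then 2 else 0) :=
    fun j hj => E_mvup e i hi2 j hj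
  have hoK : Odd (E (mvup e i) K) := by
    rw [hE K (by omega), if_neg (by omega)]
    by_cases h : K = i.1 - 1
    · rw [if_pos h]
      rw [Nat.odd_iff] at hodd ⊢
      omega
    · rw [if_neg h, Nat.sub_zero, add_zero]
      exact hodd
  rw [Hm_eq _ K h2 ?hz ?hev (Or.inr hoK), if_pos hoK]
  case hz =>
    intro j hj
    rcases Nat.lt_or_ge j 1 with h | h
    · exact E_zero_of_lt _ h
    · rw [hE j h, if_neg (by omega), if_neg (by omega), hz j hj]
  case hev =>
    intro j hj
    rcases Nat.lt_or_ge j 1 with h | h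
    · rw [E_zero_of_lt _ h]; exact Even.zero
    · rw [hE j h, if_neg (by omega), if_neg (by omega), Nat.sub_zero, add_zero]
      exact hev j hj

lemma Hm_mvup_gt_evenK (e : I →₀ ℕ) (K : ℕ) (i : I) (h2 : 2 ≤ K) (hiK : K < i.1)
    (hz : ∀ j ≤ K - 2, E e j = 0) (hev : ∀ j ≤ K - 1, Even (E e j))
    (heK : Even (E e K)) (h2e : 2 ≤ E e (K - 1)) (hei : 1 ≤ E e i.1) :
    Hm (mvup e i) = mv (mvup (mvdn e K) i) := by
  have hi2 : 2 ≤ i.1 := by omega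
  have hE : ∀ j, 1 ≤ j → E (mvup e i) j
      = E e j - (if j = i.1 then 1 else 0) + (if j = i.1 - 1 then 2 else 0) :=
    fun j hj => E_mvup e i hi2 j hj
  have heK' : ¬ Odd (E (mvup e i) K) := by
    rw [hE K (by omega), if_neg (by omega)]
    rw [Nat.even_iff] at heK
    rw [Nat.odd_iff]
    by_cases h : K = i.1 - 1
    · rw [if_pos h]; omega
    · rw [if_neg h]; omega
  rw [Hm_eq _ K h2 ?hz ?hev ?ht, if_neg heK', I3 e K i h2 hiK h2e hei]
  case hz =>
    intro j hj
    rcases Nat.lt_or_ge j 1 with h | h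
    · exact E_zero_of_lt _ h
    · rw [hE j h, if_neg (by omega), if_neg (by omega), hz j hj]
  case hev =>
    intro j hj
    rcases Nat.lt_or_ge j 1 with h | h
    · rw [E_zero_of_lt _ h]; exact Even.zero
    · rw [hE j h, if_neg (by omega), if_neg (by omega), Nat.sub_zero, add_zero]
      exact hev j hj
  case ht =>
    left
    rw [hE (K-1) (by omega), if_neg (by omega), if_neg (by omega), Nat.sub_zero, add_zero]
    exact h2e

lemma filt_mvdn (e : I →₀ ℕ) (K : ℕ) (h2 : 2 ≤ K) (heK : Even (E e K))
    (hevK1 : Even (E e (K - 1))) :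
    (mvdn e K).support.filter (fun i => Odd ((mvdn e K) i))
      = insert ⟨K, by omega⟩ (e.support.filter (fun i => Odd (e i))) := by
  ext i
  rw [mem_filt, Finset.mem_insert, mem_filt]
  have hfi := mvdn_apply e K h2 i
  by_cases hK : i.1 = K
  · refine iff_of_true ?_ (Or.inl (Subtype.ext hK))
    rw [hfi, if_neg (by omega), if_pos hK, Nat.sub_zero]
    have : e i = E e K := by rw [E_apply e i, hK]
    rw [this]
    rw [Nat.even_iff] at heK
    rw [Nat.odd_iff]
    omega
  · by_cases hK1 : i.1 = K - 1
    · have heq : e i = E e (K - 1) := by rw [E_apply e i, hK1]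
      refine iff_of_false ?_ ?_
      · rw [hfi, if_pos hK1, if_neg hK, add_zero, heq]
        rw [Nat.even_iff] at hevK1
        rw [Nat.odd_iff]
        omega
      · rintro (h | h)
        · exact hK (by rw [h])
        · rw [heq] at h
          rw [Nat.even_iff] at hevK1
          rw [Nat.odd_iff] at h
          omega
    · rw [hfi, if_neg hK1, if_neg hK, Nat.sub_zero, add_zero]
      constructor
      · exact Or.inr
      · rintro (h | h)
        · exact absurd (by rw [h] : i.1 = K) hK
        · exact h

lemma key (e : I →₀ ℕ) (he : Even (E e 1)) :
    Q 0 (Hm e) + Hf (Q 0 (mv e)) = mv e + (if e = 0 then 1 else 0) := by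
  classical
  by_cases hne : e = 0
  · subst hne
    rw [if_pos rfl]
    have h1 : Hm (0 : I →₀ ℕ) = 0 := by
      rw [Hm, dif_neg]
      rintro ⟨k, hk2, hk⟩
      have hzz : ∀ j, E (0 : I →₀ ℕ) j = 0 := by
        intro j; rw [E]; split
        · exact Finsupp.zero_apply
        · rfl
      rcases hk with hc | hc
      · rw [hzz] at hc; omega
      · rw [hzz] at hc
        rw [Nat.odd_iff] at hc
        omega
    have h2 : mv (0 : I →₀ ℕ) = 1 := by rw [mv, monomial_zero', C_1]
    rw [h1, map_zero, zero_add, h2, Derivation.map_one_eq_zero, Hf_zero]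
    rw [one_add_one_eq_two, charA]
  · -- main case
    have hex : ∃ k, P e k := exists_P e he hne
    obtain ⟨h2, ht⟩ : P e (Nat.find hex) := Nat.find_spec hex
    set K := Nat.find hex with hKdef
    have hmin : ∀ j < K, ¬ P e j := fun j hj => Nat.find_min hex hj
    have hev : ∀ j ≤ K - 1, Even (E e j) := hev_of_min e K he h2 hmin
    have hz : ∀ j ≤ K - 2, E e j = 0 := hz_of_min e K he h2 hmin
    rw [if_neg hne, Q0_mv e he, Hf_sum]
    have hHfmv : ∀ i ∈ e.support.filter (fun i => Odd (e i)),
        Hf (mv (mvup e i)) = Hm (mvup e i) := fun i _ => Hf_mv _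
    rw [Finset.sum_congr rfl hHfmv]
    by_cases hodd : Odd (E e K)
    · -- Case A
      rw [Hm_eq e K h2 hz hev ht, if_pos hodd, map_zero, zero_add]
      have hterm : ∀ i ∈ e.support.filter (fun i => Odd (e i)),
          Hm (mvup e i) = if i = (⟨K, by omega⟩ : I) then mv e else 0 := by
        intro i hi
        rw [mem_filt] at hi
        have hiK : K ≤ i.1 := odd_ge_K e K h2 hz hev i hi
        rcases eq_or_lt_of_le hiK with heq | hlt
        · have : i = (⟨K, by omega⟩ : I) := Subtype.ext heq.symm
          rw [if_pos this, this, Hm_mvup_eq_K e K h2 hz hev hodd]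
        · rw [if_neg (fun hh => by rw [hh, Imk] at hlt; omega),
            Hm_mvup_gt_oddK e K i h2 hlt hz hev hodd]
      rw [Finset.sum_congr rfl hterm]
      rw [Finset.sum_eq_single_of_mem (⟨K, by omega⟩ : I)
        (by rw [mem_filt, E_apply e _, Imk]; exact hodd)
        (fun b _ hb => by rw [if_neg hb])]
      rw [if_pos rfl, add_zero]
    · -- Case B
      have h2e : 2 ≤ E e (K - 1) := by
        rcases ht with hc | hc
        · exact hc
        · exact absurd hc hodd
      have heK : Even (E e K) := Nat.not_odd_iff_even.mp hodd
      rw [Hm_eq e K h2 hz hev ht, if_neg hodd]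
      have he' : Even (E (mvdn e K) 1) := by
        rw [E_mvdn e K h2 1 le_rfl, if_neg (show ¬ (1 = K) by omega), add_zero]
        by_cases h1 : 1 = K - 1
        · rw [if_pos h1]
          rw [← h1] at h2e
          have := hev 1 (by omega)
          rw [Nat.even_iff] at this ⊢
          omega
        · rw [if_neg h1]
          simpa using he
      rw [Q0_mv _ he', filt_mvdn e K h2 heK (hev (K-1) le_rfl)]
      rw [Finset.sum_insert (by rw [mem_filt, E_apply e _, Imk]; exact hodd)]
      rw [show mvup (mvdn e K) ⟨K, by omega⟩ = e from I2 e K h2 h2e]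
      have hterm : ∀ i ∈ e.support.filter (fun i => Odd (e i)),
          Hm (mvup e i) = mv (mvup (mvdn e K) i) := by
        intro i hi
        rw [mem_filt] at hi
        have hiK : K ≤ i.1 := odd_ge_K e K h2 hz hev i hi
        have hlt : K < i.1 := by
          rcases eq_or_lt_of_le hiK with heq | hlt
          · exfalso
            rw [E_apply e i, ← heq] at hi
            rw [Nat.even_iff] at heK
            rw [Nat.odd_iff] at hi
            omega
          · exact hlt
        have hei : 1 ≤ E e i.1 := by
          rw [← E_apply e i]
          rw [Nat.odd_iff] at hi
          omega
        exact Hm_mvup_gt_evenK e K i h2 hlt hz hev heK h2e hei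
      rw [Finset.sum_congr rfl hterm, add_assoc]
      have : ∀ (T : A), T + T = 0 := by
        intro T
        rw [← two_mul, charA, zero_mul]
      rw [this, add_zero]

lemma homotopy (x : A) (hx : ∀ e ∈ x.support, Even (E e 1)) :
    Q 0 (Hf x) + Hf (Q 0 x) = x + (coeff 0 x) • 1 := by
  classical
  have hx_eq : x = ∑ e ∈ x.support, coeff e x • mv e := by
    conv_lhs => rw [← support_sum_monomial_coeff x]
    apply Finset.sum_congr rfl
    intro e _
    rw [mv, smul_monomial, smul_eq_mul, mul_one]
  have step1 : Q 0 (Hf x) = ∑ e ∈ x.support, coeff e x • Q 0 (Hm e) := by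
    rw [Hf, map_sum]
    apply Finset.sum_congr rfl
    intro e _
    rw [Derivation.map_smul]
  have step2 : Hf (Q 0 x) = ∑ e ∈ x.support, coeff e x • Hf (Q 0 (mv e)) := by
    conv_lhs => rw [hx_eq]
    rw [map_sum, Hf_sum]
    apply Finset.sum_congr rfl
    intro e _
    rw [Derivation.map_smul, Hf_smul]
  rw [step1, step2, ← Finset.sum_add_distrib]
  have step3 : ∀ e ∈ x.support,
      coeff e x • Q 0 (Hm e) + coeff e x • Hf (Q 0 (mv e))
        = coeff e x • mv e + (if e = 0 then coeff 0 x • (1:A) else 0) := by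
    intro e hee
    rw [← smul_add, key e (hx e hee), smul_add]
    congr 1
    by_cases h0 : e = 0
    · rw [if_pos h0, if_pos h0, h0]
    · rw [if_neg h0, if_neg h0, smul_zero]
  rw [Finset.sum_congr rfl step3, Finset.sum_add_distrib, ← hx_eq]
  congr 1
  by_cases h0 : (0 : I →₀ ℕ) ∈ x.support
  · rw [Finset.sum_eq_single_of_mem 0 h0 (fun b _ hb => if_neg hb), if_pos rfl]
  · rw [Finset.sum_eq_zero (fun b hb => if_neg (fun hh : b = 0 => h0 (hh ▸ hb)))]
    rw [notMem_support_iff.mp h0, zero_smul]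

theorem part3b : ∀ x ∈ S, Q 0 x = 0 → ∃ y ∈ S, ∃ c : F₂, x = Q 0 y + c • (1 : A) := by
  intro x hx hq
  refine ⟨Hf x, Hf_mem hx, coeff 0 x, ?_⟩
  have := homotopy x (support_even hx)
  rw [hq, Hf_zero, add_zero] at this
  rw [this, add_assoc, ← two_mul, charA, zero_mul, add_zero]

/-- The Margolis homology of `H_*(HZ; F₂)` is `F₂` for `m = 0` and vanishes for `m ≥ 1`. -/
theorem margolisHomology_HZ :
    (∀ m : ℕ, ∀ x ∈ S, Q m x ∈ S) ∧
    (∀ m : ℕ, 1 ≤ m → ∀ x ∈ S, Q m x = 0 → ∃ y ∈ S, x = Q m y) ∧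
    (¬ ∃ y ∈ S, Q 0 y = 1) ∧
    (∀ x ∈ S, Q 0 x = 0 → ∃ y ∈ S, ∃ c : F₂, x = Q 0 y + c • (1 : A)) := by
  exact ⟨part1, part2, part3a, part3b⟩
end

section
/- Fix n ≥ 1. Then Q_m(V_n) ⊆ V_n for every m ∈ ℕ, and for every m with 1 ≤ m ≤ n, every x ∈ V_n with Q_m(x) = 0 equals Q_m(y) for some y ∈ V_n; that is, the Margolis homology of V_n with respect to Q_m vanishes for all 1 ≤ m ≤ n. In particular the case m = n gives H(z(n)/v_n; Q_n) ≅ 0, one chromatic height higher than for z(n). (Corollary 2.21 of the paper, acyclicity cases: H(z(n)/v_n; Q_m) ≅ 0 for 1 ≤ m ≤ n.) -/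
/-!
Let `F₂ := ZMod 2` and `A := MvPolynomial {i : ℕ // 1 ≤ i} F₂`, modeling the mod 2 dual
Steenrod algebra, with Milnor primitives `Q m` as below.  For `n ≥ 1` let `Sn n ⊆ A` be the
`F₂`-subalgebra generated by `ξ₁², ξ₂, …, ξ_n`, and let `Vn n := S_n + S_n·ξ_{n+1}` be the set
of all elements `s + s' * ξ_{n+1}` with `s, s' ∈ S_n`; `Vn n` models `H_*(z(n)/v_n; F₂)`.

STATEMENT (Corollary 2.21, acyclicity cases): `Q_m (V_n) ⊆ V_n` for every `m`, and for every
`1 ≤ m ≤ n`, every `x ∈ V_n` with `Q_m x = 0` equals `Q_m y` for some `y ∈ V_n`; that is,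
`H(z(n)/v_n; Q_m) ≅ 0` for `1 ≤ m ≤ n`.
-/

open MvPolynomial

/-- The subalgebra `S_n = F₂[ξ₁², ξ₂, …, ξ_n] ⊆ A`, modeling `H_*(z(n); F₂)`. -/
noncomputable def Sn (n : ℕ) : Subalgebra F₂ A :=
  Algebra.adjoin F₂ ({ξ 1 ^ 2} ∪ {y : A | ∃ k : ℕ, 2 ≤ k ∧ k ≤ n ∧ y = ξ k})

/-- `V_n = S_n + S_n · ξ_{n+1}` — all elements `s + s' * ξ_{n+1}` with `s, s' ∈ S_n` —
modeling `H_*(z(n)/v_n; F₂) ≅ F₂[ξ̄₁², ξ̄₂, …, ξ̄_n] ⊗ E(ξ̄_{n+1})`. -/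
noncomputable def Vn (n : ℕ) : Set A :=
  {x : A | ∃ s ∈ Sn n, ∃ s' ∈ Sn n, x = s + s' * ξ (n + 1)}

/-!
For `m < n` the generator `ξ_{m+1}` lies in `S_n` and `Q_m ξ_{m+1} = 1`, so multiplication by
`ξ_{m+1}` is a contracting homotopy: a cycle `x` is `Q_m (ξ_{m+1} x)`. For `m = n`, `Q_n` kills
`S_n` (its generators are squares or `ξ_k` with `k ≤ n`) and sends `ξ_{n+1}` to `1`, so
`Q_n (s + s' ξ_{n+1}) = s'`; a cycle is thus some `s ∈ S_n`, and `s = Q_n (s ξ_{n+1})`.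
-/

open Algebra

namespace Derivation

variable {R A : Type*} [CommSemiring R] [CommSemiring A] [Algebra R A]

theorem map_mul_of_map_eq_one_of_map_eq_zero {D : Derivation R A A} {u x : A} (hu : D u = 1)
    (hx : D x = 0) : D (u * x) = x := by
  rw [leibniz, hx, hu, smul_zero, smul_eq_mul, mul_one, zero_add]

theorem map_mem_adjoin {D : Derivation R A A} {s : Set A} (h : ∀ a ∈ s, D a ∈ adjoin R s)
    {x : A} (hx : x ∈ adjoin R s) : D x ∈ adjoin R s := by
  induction hx using Algebra.adjoin_induction with
  | mem a ha => exact h a ha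
  | algebraMap r => rw [map_algebraMap]; exact zero_mem _
  | add x y _ _ ihx ihy => rw [map_add]; exact add_mem ihx ihy
  | mul x y hx hy ihx ihy =>
    rw [leibniz, smul_eq_mul, smul_eq_mul]
    exact add_mem (mul_mem hx ihy) (mul_mem hy ihx)

theorem map_eq_zero_of_mem_adjoin {D : Derivation R A A} {s : Set A} (h : ∀ a ∈ s, D a = 0)
    {x : A} (hx : x ∈ adjoin R s) : D x = 0 :=
  eqOn_adjoin (D1 := D) (D2 := 0) h hx

end Derivation

theorem Derivation.map_sq_eq_zero {R A : Type*} [CommSemiring R] [CommRing A] [Algebra R A]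
    [CharP A 2] (D : Derivation R A A) (a : A) : D (a ^ 2) = 0 := by
  rw [pow_two, Derivation.leibniz]
  exact CharTwo.add_self_eq_zero _

theorem xi_zero : ξ 0 = 1 := dif_neg (by omega)

theorem Q_xi (m k : ℕ) (hk : 1 ≤ k) :
    Q m (ξ k) = if m + 1 ≤ k then ξ (k - (m + 1)) ^ 2 ^ (m + 1) else 0 := by
  rw [ξ, dif_pos hk, Q, mkDerivation_X]

theorem Q_xi_succ_self (m : ℕ) : Q m (ξ (m + 1)) = 1 := by
  rw [Q_xi m (m + 1) (by omega), if_pos le_rfl, Nat.sub_self, xi_zero, one_pow]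

theorem xi_mem_Sn {n k : ℕ} (hk : 2 ≤ k) (hkn : k ≤ n) : ξ k ∈ Sn n :=
  subset_adjoin (Or.inr ⟨k, hk, hkn, rfl⟩)

theorem xi_sq_mem_Sn {n j : ℕ} (hj : j ≤ n) : ξ j ^ 2 ∈ Sn n := by
  match j with
  | 0 => rw [xi_zero, one_pow]; exact one_mem _
  | 1 => exact subset_adjoin (Or.inl rfl)
  | j + 2 => exact pow_mem (xi_mem_Sn (by omega) hj) 2

theorem Q_xi_mem_Sn (n m : ℕ) {k : ℕ} (hk : 1 ≤ k) (hkn : k ≤ n + 1) : Q m (ξ k) ∈ Sn n := by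
  rw [Q_xi m k hk]
  split_ifs
  · rw [pow_succ', pow_mul]
    exact pow_mem (xi_sq_mem_Sn (by omega)) _
  · exact zero_mem _

theorem Q_mem_Sn (n m : ℕ) {s : A} (hs : s ∈ Sn n) : Q m s ∈ Sn n := by
  refine Derivation.map_mem_adjoin ?_ hs
  rintro _ (rfl | ⟨k, hk, hkn, rfl⟩)
  · rw [Derivation.map_sq_eq_zero]; exact zero_mem _
  · exact Q_xi_mem_Sn n m (by omega) (by omega)

theorem Q_eq_zero_of_mem_Sn (n : ℕ) {s : A} (hs : s ∈ Sn n) : Q n s = 0 := by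
  refine Derivation.map_eq_zero_of_mem_adjoin ?_ hs
  rintro _ (rfl | ⟨k, hk, hkn, rfl⟩)
  · exact Derivation.map_sq_eq_zero _ _
  · rw [Q_xi n k (by omega), if_neg (by omega)]

theorem mul_mem_Vn {n : ℕ} {u x : A} (hu : u ∈ Sn n) (hx : x ∈ Vn n) : u * x ∈ Vn n := by
  obtain ⟨s, hs, s', hs', rfl⟩ := hx
  exact ⟨u * s, mul_mem hu hs, u * s', mul_mem hu hs', by ring⟩

theorem Q_add_mul (m : ℕ) (s s' t : A) :
    Q m (s + s' * t) = (Q m s + s' * Q m t) + Q m s' * t := by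
  rw [map_add, Derivation.leibniz, smul_eq_mul, smul_eq_mul]
  ring

theorem Q_mem_Vn (n m : ℕ) {x : A} (hx : x ∈ Vn n) : Q m x ∈ Vn n := by
  obtain ⟨s, hs, s', hs', rfl⟩ := hx
  rw [Q_add_mul]
  exact ⟨_, add_mem (Q_mem_Sn n m hs) (mul_mem hs' (Q_xi_mem_Sn n m (by omega) le_rfl)),
    _, Q_mem_Sn n m hs', rfl⟩

theorem exists_eq_Q_of_lt {n m : ℕ} (hm : 1 ≤ m) (hmn : m < n) {x : A} (hx : x ∈ Vn n)
    (hQx : Q m x = 0) : ∃ y ∈ Vn n, x = Q m y :=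
  ⟨ξ (m + 1) * x, mul_mem_Vn (xi_mem_Sn (by omega) hmn) hx,
    (Derivation.map_mul_of_map_eq_one_of_map_eq_zero (Q_xi_succ_self m) hQx).symm⟩

theorem Q_self_add_mul_xi {n : ℕ} {s s' : A} (hs : s ∈ Sn n) (hs' : s' ∈ Sn n) :
    Q n (s + s' * ξ (n + 1)) = s' := by
  rw [Q_add_mul, Q_eq_zero_of_mem_Sn n hs, Q_eq_zero_of_mem_Sn n hs', Q_xi_succ_self]
  ring

theorem exists_eq_Q_self {n : ℕ} {x : A} (hx : x ∈ Vn n) (hQx : Q n x = 0) :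
    ∃ y ∈ Vn n, x = Q n y := by
  obtain ⟨s, hs, s', hs', rfl⟩ := hx
  obtain rfl : s' = 0 := by rwa [Q_self_add_mul_xi hs hs'] at hQx
  refine ⟨s * ξ (n + 1), ⟨0, zero_mem _, s, hs, by ring⟩, ?_⟩
  rw [zero_mul, add_zero, ← zero_add (s * ξ (n + 1)), Q_self_add_mul_xi (zero_mem _) hs]

theorem margolisHomology_zn_mod_vn_acyclic_general (n : ℕ) :
    (∀ m : ℕ, ∀ x ∈ Vn n, Q m x ∈ Vn n) ∧
    (∀ m : ℕ, 1 ≤ m → m ≤ n → ∀ x ∈ Vn n, Q m x = 0 → ∃ y ∈ Vn n, x = Q m y) := by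
  refine ⟨fun m x hx => Q_mem_Vn n m hx, fun m hm hmn x hx hQx => ?_⟩
  rcases hmn.lt_or_eq with hlt | rfl
  · exact exists_eq_Q_of_lt hm hlt hx hQx
  · exact exists_eq_Q_self hx hQx

/-- Corollary 2.21 (acyclicity cases): `H(z(n)/v_n; Q_m) ≅ 0` for `1 ≤ m ≤ n`. -/
theorem margolisHomology_zn_mod_vn_acyclic (n : ℕ) (hn : 1 ≤ n) :
    (∀ m : ℕ, ∀ x ∈ Vn n, Q m x ∈ Vn n) ∧
    (∀ m : ℕ, 1 ≤ m → m ≤ n → ∀ x ∈ Vn n, Q m x = 0 → ∃ y ∈ Vn n, x = Q m y) :=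
  margolisHomology_zn_mod_vn_acyclic_general n
end
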